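/- arXiv:1802.10425 — 2 statements merged into one kernel-verified Lean document; each statement's English description precedes it below -/
import Mathlib

section
/- For any small category D, the ind-completion Ind(D) is a continuous category: the colimit functor ε : Ind(Ind(D)) ⥤ Ind(D) admits a left adjoint β, given by applying Ind to the canonical embedding Ind(D) ⥤ Ind(Ind(D)) induced by the Yoneda/right adjoint α sending ind-objects to formal ind-objects. -/
set_option maxHeartbeats 2000000

open CategoryTheory Limits

universe u

namespace IndContinuousAux

open CategoryTheory Limits Opposite

universe v u₁

variable {C : Type u₁} [Category.{v} C]

section Eps

variable [HasFilteredColimits C]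

/-- The pointwise adjunction equivalence defining `ε`. -/
noncomputable def epsEquiv (X : Ind C) (Y : C) :
    (colimit X.presentation.F ⟶ Y) ≃ (X ⟶ Ind.yoneda.obj Y) where
  toFun f := X.colimitPresentationCompYoneda.inv ≫
    colimit.desc (X.presentation.F ⋙ Ind.yoneda)
      { pt := Ind.yoneda.obj Y
        ι :=
          { app := fun i => Ind.yoneda.map (colimit.ι X.presentation.F i ≫ f)
            naturality := by
              intro i j φ
              dsimp
              rw [Category.comp_id, ← Functor.map_comp, ← Category.assoc, colimit.w] } }
  invFun g := colimit.desc X.presentation.F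
      { pt := Y
        ι :=
          { app := fun i => Ind.yoneda.preimage
              (colimit.ι (X.presentation.F ⋙ Ind.yoneda) i ≫
                X.colimitPresentationCompYoneda.hom ≫ g)
            naturality := by
              intro i j φ
              apply Ind.yoneda.map_injective
              dsimp
              rw [Category.comp_id, Functor.map_comp, Functor.map_preimage, Functor.map_preimage]
              exact colimit.w_assoc (X.presentation.F ⋙ Ind.yoneda) φ _ } }
  left_inv f := by
    apply colimit.hom_ext
    intro i
    rw [colimit.ι_desc]
    dsimp
    apply Ind.yoneda.map_injective
    rw [Functor.map_preimage, Iso.hom_inv_id_assoc, colimit.ι_desc]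
  right_inv g := by
    dsimp
    rw [Iso.inv_comp_eq]
    apply colimit.hom_ext
    intro i
    rw [colimit.ι_desc]
    dsimp
    rw [colimit.ι_desc]
    dsimp
    rw [Functor.map_preimage]

theorem epsEquiv_nat (X : Ind C) (Y Y' : C) (g : Y ⟶ Y') (h : colimit X.presentation.F ⟶ Y) :
    epsEquiv X Y' (h ≫ g) = epsEquiv X Y h ≫ Ind.yoneda.map g := by
  dsimp [epsEquiv]
  rw [Category.assoc]
  congr 1
  apply colimit.hom_ext
  intro i
  rw [colimit.ι_desc, colimit.ι_desc_assoc]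
  dsimp
  rw [← Functor.map_comp, Category.assoc]

/-- The functor computing filtered colimits. -/
noncomputable def eps : Ind C ⥤ C :=
  Adjunction.leftAdjointOfEquiv (fun X Y => epsEquiv X Y) (fun X Y Y' g h => epsEquiv_nat X Y Y' g h)

/-- `ε` is left adjoint to `Ind.yoneda`. -/
noncomputable def epsAdj : eps (C := C) ⊣ Ind.yoneda :=
  Adjunction.adjunctionOfEquivLeft _ _

end Eps

section Compact

/-- `Hom(Ind.yoneda c, -)` is isomorphic to evaluating the inclusion at the Yoneda presheaf. -/
noncomputable def coyonedaIndYonedaIso (c : C) :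
    coyoneda.obj (op (Ind.yoneda.obj c)) ⋙ uliftFunctor.{u₁} ≅
      Ind.inclusion C ⋙ coyoneda.obj (op (yoneda.obj c)) :=
  NatIso.ofComponents
    (fun B => Equiv.toIso
      (Equiv.ulift.trans
        (Ind.inclusion.fullyFaithful.homEquiv.trans
          (Iso.homCongr (Ind.yonedaCompInclusion.app c) (Iso.refl _)))))
    (by
      intro B B' f
      ext ⟨g⟩
      dsimp [Functor.FullyFaithful.homEquiv]
      change (Ind.yonedaCompInclusion.app c).inv ≫ (Ind.inclusion C).map (g ≫ f) ≫ 𝟙 _ = ((Ind.yonedaCompInclusion.app c).inv ≫ (Ind.inclusion C).map g ≫ 𝟙 _) ≫ (Ind.inclusion C).map f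
      rw [Functor.map_comp]
      simp)

/-- The coyoneda functor of an object in the image of `Ind.yoneda` preserves filtered
colimits. -/
noncomputable def preservesFilteredCoyonedaIndYoneda (c : C) (J : Type v) [SmallCategory J]
    [IsFiltered J] : PreservesColimitsOfShape J (coyoneda.obj (op (Ind.yoneda.obj c))) := by
  haveI : PreservesColimitsOfShape J (coyoneda.obj (op (yoneda.obj c)) :
      (Cᵒᵖ ⥤ Type v) ⥤ Type (max u₁ v)) := ⟨fun {F} => inferInstance⟩
  haveI : PreservesColimitsOfShape J
      (coyoneda.obj (op (Ind.yoneda.obj c)) ⋙ uliftFunctor.{u₁}) :=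
    preservesColimitsOfShape_of_natIso (coyonedaIndYonedaIso c).symm
  haveI : ReflectsColimitsOfSize.{v, v} (uliftFunctor.{u₁, v}) := fullyFaithful_reflectsColimits _
  exact preservesColimitsOfShape_of_reflects_of_preserves _ uliftFunctor.{u₁}

end Compact

section Beta

variable [HasFilteredColimits C]

/-- The comparison natural transformation `Hom(y A, -) ⟶ Hom(A, ε -)`. -/
noncomputable def nu (A : C) :
    coyoneda.obj (op (Ind.yoneda.obj A)) ⟶ eps (C := C) ⋙ coyoneda.obj (op A) where
  app W := TypeCat.ofHom (fun g => inv (epsAdj.counit.app A) ≫ eps.map g)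
  naturality W W' h := by
    ext g
    dsimp
    rw [Functor.map_comp, Category.assoc]

omit [HasFilteredColimits C] in
theorem dummy : True := trivial

theorem comp_nu {A B : C} (h : A ⟶ B) {W : Ind C} (g : Ind.yoneda.obj B ⟶ W) :
    h ≫ (nu B).app W g = (nu A).app W (Ind.yoneda.map h ≫ g) := by
  dsimp [nu]
  rw [Functor.map_comp, ← Category.assoc, ← Category.assoc]
  congr 1
  rw [IsIso.eq_inv_comp, ← Category.assoc, IsIso.comp_inv_eq]
  exact (epsAdj.counit.naturality h).symm

theorem isIso_nu_app_yoneda (A B : C) : IsIso ((nu A).app (Ind.yoneda.obj B)) := by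
  have : ((nu A).app (Ind.yoneda.obj B)) = TypeCat.ofHom
      ⇑((Ind.yoneda.fullyFaithful.homEquiv (X := A) (Y := B)).symm.trans
        (Iso.homCongr (Iso.refl A) (asIso (epsAdj.counit.app B)).symm)) := by
    ext g
    obtain ⟨h, rfl⟩ := Ind.yoneda.map_surjective g
    dsimp [nu, Functor.FullyFaithful.homEquiv]
    rw [Functor.FullyFaithful.preimage_map]
    simp only [Iso.homCongr_apply, Iso.refl_inv, Category.id_comp, Iso.symm_hom, asIso_inv]
    rw [IsIso.inv_comp_eq, ← Category.assoc, IsIso.eq_comp_inv]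
    simpa using epsAdj.counit.naturality h
  rw [this]
  exact (isIso_iff_bijective _).2 (Equiv.bijective _)

theorem isIso_nu_app (A : C)
    (hA : ∀ (J : Type v) [SmallCategory J] [IsFiltered J],
      PreservesColimitsOfShape J (coyoneda.obj (op A)))
    (W : Ind C) : IsIso ((nu A).app W) := by
  haveI : PreservesColimitsOfSize.{v, v} (eps (C := C)) := epsAdj.leftAdjoint_preservesColimits
  set P := W.presentation with hP
  set T := P.F ⋙ Ind.yoneda with hT
  haveI := hA P.I
  haveI := preservesFilteredCoyonedaIndYoneda A P.I
  haveI : ∀ j, IsIso ((Functor.whiskerLeft T (nu A)).app j) := fun j => isIso_nu_app_yoneda A (P.F.obj j)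
  haveI : IsIso (Functor.whiskerLeft T (nu A)) := NatIso.isIso_of_isIso_app _
  have h₁ : IsColimit ((coyoneda.obj (op (Ind.yoneda.obj A))).mapCocone (colimit.cocone T)) :=
    isColimitOfPreserves _ (colimit.isColimit T)
  have h₂ : IsColimit ((eps (C := C) ⋙ coyoneda.obj (op A)).mapCocone (colimit.cocone T)) :=
    isColimitOfPreserves _ (colimit.isColimit T)
  have h₃ : IsColimit ((Cocone.precompose (asIso (Functor.whiskerLeft T (nu A))).hom).obj
      ((eps (C := C) ⋙ coyoneda.obj (op A)).mapCocone (colimit.cocone T))) :=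
    (IsColimit.precomposeHomEquiv _ _).symm h₂
  have key : IsIso ((nu A).app (colimit T)) := by
    let f : (coyoneda.obj (op (Ind.yoneda.obj A))).mapCocone (colimit.cocone T) ⟶
        (Cocone.precompose (asIso (Functor.whiskerLeft T (nu A))).hom).obj
          ((eps (C := C) ⋙ coyoneda.obj (op A)).mapCocone (colimit.cocone T)) :=
      { hom := (nu A).app (colimit T)
        w := fun j => by
          simpa using ((nu A).naturality (colimit.ι T j)) }
    have : IsIso f := IsColimit.hom_isIso h₁ h₃ f
    exact (Cocone.forget _).map_isIso f
  have nat := (nu A).naturality (Ind.colimitPresentationCompYoneda W).hom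
  haveI : IsIso ((coyoneda.obj (op (Ind.yoneda.obj A))).map
      (Ind.colimitPresentationCompYoneda W).hom ≫ (nu A).app W) := by
    rw [nat]
    infer_instance
  exact IsIso.of_isIso_comp_left
    ((coyoneda.obj (op (Ind.yoneda.obj A))).map (Ind.colimitPresentationCompYoneda W).hom)
    ((nu A).app W)

/-- The key equivalence. -/
noncomputable def nuEquiv (A : C)
    (hA : ∀ (J : Type v) [SmallCategory J] [IsFiltered J],
      PreservesColimitsOfShape J (coyoneda.obj (op A)))
    (W : Ind C) : (Ind.yoneda.obj A ⟶ W) ≃ (A ⟶ eps.obj W) :=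
  haveI := isIso_nu_app A hA W
  (asIso ((nu A).app W)).toEquiv

theorem nuEquiv_apply (A : C) (hA) (W : Ind C) (g : Ind.yoneda.obj A ⟶ W) :
    nuEquiv A hA W g = (nu A).app W g := rfl

end Beta

end IndContinuousAux

namespace IndContinuousAux

section Final

variable {D : Type u} [SmallCategory D]

theorem nu_app_comp {C : Type u₁} [Category.{v} C] [HasFilteredColimits C] (A : C) {W W' : Ind C} (s : Ind.yoneda.obj A ⟶ W)
    (g : W ⟶ W') : (nu A).app W' (s ≫ g) = (nu A).app W s ≫ eps.map g := by
  dsimp [nu]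
  rw [Functor.map_comp, Category.assoc]

/-- The compactness equivalence for objects of the presentation of `X`. -/
noncomputable def kappa (X : Ind D) (i : X.presentation.I) (W : Ind (Ind D)) :
    (Ind.yoneda.obj (Ind.yoneda.obj (X.presentation.F.obj i)) ⟶ W) ≃
      (Ind.yoneda.obj (X.presentation.F.obj i) ⟶ eps.obj W) :=
  nuEquiv _ (fun J _ _ => preservesFilteredCoyonedaIndYoneda (X.presentation.F.obj i) J) W

theorem kappa_eq (X : Ind D) (i : X.presentation.I) (W : Ind (Ind D)) :
    ⇑(kappa X i W) = (nu (Ind.yoneda.obj (X.presentation.F.obj i))).app W := rfl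

theorem kappa_natural (X : Ind D) {i j : X.presentation.I} (φ : i ⟶ j) (W : Ind (Ind D))
    (g : Ind.yoneda.obj (Ind.yoneda.obj (X.presentation.F.obj j)) ⟶ W) :
    Ind.yoneda.map (X.presentation.F.map φ) ≫ kappa X j W g =
      kappa X i W (Ind.yoneda.map (Ind.yoneda.map (X.presentation.F.map φ)) ≫ g) := by
  rw [kappa_eq, kappa_eq]
  exact comp_nu _ _

theorem kappa_symm_natural (X : Ind D) {i j : X.presentation.I} (φ : i ⟶ j) (W : Ind (Ind D))
    (s : Ind.yoneda.obj (X.presentation.F.obj j) ⟶ eps.obj W) :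
    Ind.yoneda.map (Ind.yoneda.map (X.presentation.F.map φ)) ≫ (kappa X j W).symm s =
      (kappa X i W).symm (Ind.yoneda.map (X.presentation.F.map φ) ≫ s) := by
  apply (kappa X i W).injective
  rw [Equiv.apply_symm_apply (kappa X i W), ← kappa_natural, Equiv.apply_symm_apply]

theorem kappa_comp (X : Ind D) (i : X.presentation.I) {W W' : Ind (Ind D)}
    (s : Ind.yoneda.obj (Ind.yoneda.obj (X.presentation.F.obj i)) ⟶ W) (g : W ⟶ W') :
    kappa X i W' (s ≫ g) = kappa X i W s ≫ eps.map g := by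
  rw [kappa_eq, kappa_eq]
  exact nu_app_comp _ _ _

/-- The pointwise adjunction equivalence defining `β`. -/
noncomputable def betaEquiv (X : Ind D) (W : Ind (Ind D)) :
    (colimit ((X.presentation.F ⋙ Ind.yoneda) ⋙ Ind.yoneda) ⟶ W) ≃ (X ⟶ eps.obj W) where
  toFun f := X.colimitPresentationCompYoneda.inv ≫
    colimit.desc (X.presentation.F ⋙ Ind.yoneda)
      { pt := eps.obj W
        ι :=
          { app := fun i => kappa X i W
              (colimit.ι ((X.presentation.F ⋙ Ind.yoneda) ⋙ Ind.yoneda) i ≫ f)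
            naturality := by
              intro i j φ
              simp only [Functor.const_obj_map, Functor.comp_map, kappa_natural]
              exact Eq.trans (congrArg (kappa X i W)
                (colimit.w_assoc ((X.presentation.F ⋙ Ind.yoneda) ⋙ Ind.yoneda) φ f))
                (Category.comp_id _).symm } }
  invFun g := colimit.desc ((X.presentation.F ⋙ Ind.yoneda) ⋙ Ind.yoneda)
      { pt := W
        ι :=
          { app := fun i => (kappa X i W).symm
              (colimit.ι (X.presentation.F ⋙ Ind.yoneda) i ≫
                X.colimitPresentationCompYoneda.hom ≫ g)
            naturality := by
              intro i j φ
              simp only [Functor.const_obj_map, Functor.comp_map]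
              erw [kappa_symm_natural]
              exact Eq.trans (congrArg (kappa X i W).symm
                (colimit.w_assoc (X.presentation.F ⋙ Ind.yoneda) φ
                  (X.colimitPresentationCompYoneda.hom ≫ g)))
                (Category.comp_id _).symm } }
  left_inv f := by
    apply colimit.hom_ext
    intro i
    simp only [colimit.ι_desc, Iso.hom_inv_id_assoc, Equiv.symm_apply_apply]
  right_inv g := by
    show X.colimitPresentationCompYoneda.inv ≫ _ = g
    rw [Iso.inv_comp_eq]
    apply colimit.hom_ext
    intro i
    simp only [colimit.ι_desc, Equiv.apply_symm_apply]


theorem betaEquiv_nat (X : Ind D) (W W' : Ind (Ind D)) (g : W ⟶ W')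
    (h : colimit ((X.presentation.F ⋙ Ind.yoneda) ⋙ Ind.yoneda) ⟶ W) :
    betaEquiv X W' (h ≫ g) = betaEquiv X W h ≫ eps.map g := by
  simp only [betaEquiv, Equiv.coe_fn_mk]
  rw [Category.assoc]
  congr 1
  apply colimit.hom_ext
  intro i
  simp only [colimit.ι_desc, colimit.ι_desc_assoc]
  rw [← Category.assoc, kappa_comp]

/-- The left adjoint `β` of `ε`. -/
noncomputable def beta : Ind D ⥤ Ind (Ind D) :=
  Adjunction.leftAdjointOfEquiv (fun X W => betaEquiv X W)
    (fun X W W' g h => betaEquiv_nat X W W' g h)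

/-- `β` is left adjoint to `ε`. -/
noncomputable def betaAdj : beta (D := D) ⊣ eps :=
  Adjunction.adjunctionOfEquivLeft _ _

end Final

end IndContinuousAux

open IndContinuousAux in
/-- For a small category `D`, the ind-completion `Ind D` is a continuous category:
the functor `ε : Ind (Ind D) ⥤ Ind D` computing filtered colimits (characterized as
the left adjoint of the canonical embedding `Ind.yoneda : Ind D ⥤ Ind (Ind D)`)
admits a further left adjoint `β`. -/
theorem ind_is_continuous (D : Type u) [SmallCategory D] :
    ∃ (ε : Ind (Ind D) ⥤ Ind D) (β : Ind D ⥤ Ind (Ind D)),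
      Nonempty (ε ⊣ Ind.yoneda) ∧ Nonempty (β ⊣ ε) :=
  ⟨eps, beta, ⟨epsAdj⟩, ⟨betaAdj⟩⟩
end

section
/- If C is a Grothendieck site on a small category with finite limits whose topology is finitary (every covering sieve is generated by finitely many morphisms), then the category of sheaves of sets Sh(C) is closed under filtered colimits computed in presheaves; consequently the sheafification reflector PSh(C) ⥤ Sh(C) preserves filtered colimits and Sh(C) is finitely accessible (locally finitely presentable). -/
open CategoryTheory Limits Opposite

universe u

noncomputable section

/-- A Grothendieck topology is finitary if every covering sieve is generated by
finitely many morphisms belonging to it. -/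
def FinitaryTopology {C : Type u} [SmallCategory C] (J : GrothendieckTopology C) : Prop :=
  ∀ (c : C) (S : Sieve c), S ∈ J c →
    ∃ (ι : Type u) (_ : Finite ι) (Y : ι → C) (g : ∀ i, Y i ⟶ c),
      (∀ i, S.arrows (g i)) ∧ Sieve.generate (Presieve.ofArrows Y g) = S

namespace LFPAux

instance instSheafColim {C : Type u} [SmallCategory C] (J : GrothendieckTopology C) :
    HasColimitsOfSize.{u, u} (Sheaf J (Type u)) := Sheaf.instHasColimitsOfSize

variable {K : Type u} [SmallCategory K] {D : Type u} [Category.{u} D]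

lemma fan_exists [IsFiltered K] {ι : Type*} [Finite ι] (k₀ : K) (k : ι → K)
    (u : ∀ i, k₀ ⟶ k i) :
    ∃ (l : K) (w : ∀ i, k i ⟶ l) (z : k₀ ⟶ l), ∀ i, u i ≫ w i = z := by
  classical
  cases nonempty_fintype ι
  let G : WidePushoutShape ι ⥤ K := WidePushoutShape.wideSpan k₀ k u
  let c := IsFiltered.cocone G
  refine ⟨c.pt, fun i => c.ι.app (some i), c.ι.app none, fun i => ?_⟩
  have := c.w (WidePushoutShape.Hom.init i)
  exact this

lemma ι_naturality_apply (F : K ⥤ (D ⥤ Type u)) {k l : K} (u : k ⟶ l) (d : D)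
    (ξ : (F.obj k).obj d) :
    (colimit.ι F l).app d ((F.map u).app d ξ) = (colimit.ι F k).app d ξ :=
  congrFun (congrArg (fun t => t.app d) (colimit.w F u)) ξ

lemma ev_jointly_surjective (F : K ⥤ (D ⥤ Type u)) (d : D) (x : (colimit F).obj d) :
    ∃ k y, (colimit.ι F k).app d y = x := by
  obtain ⟨k, y, hy⟩ := Types.jointly_surjective _
    (colimit.isColimit (F ⋙ (evaluation D (Type u)).obj d))
    ((colimitObjIsoColimitCompEvaluation F d).hom x)
  refine ⟨k, y, (colimitObjIsoColimitCompEvaluation F d).toEquiv.injective ?_⟩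
  have h2 := types_congr_hom (colimitObjIsoColimitCompEvaluation_ι_app_hom F k d) y
  exact h2.trans (by simpa using hy)

lemma ev_eq_iff [IsFiltered K] (F : K ⥤ (D ⥤ Type u)) {d : D} {k k' : K}
    {x : (F.obj k).obj d} {x' : (F.obj k').obj d}
    (h : (colimit.ι F k).app d x = (colimit.ι F k').app d x') :
    ∃ (l : K) (u : k ⟶ l) (v : k' ⟶ l), (F.map u).app d x = (F.map v).app d x' := by
  have h' : colimit.ι (F ⋙ (evaluation D (Type u)).obj d) k x
      = colimit.ι (F ⋙ (evaluation D (Type u)).obj d) k' x' := by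
    have e1 := types_congr_hom (colimitObjIsoColimitCompEvaluation_ι_app_hom F k d) x
    have e2 := types_congr_hom (colimitObjIsoColimitCompEvaluation_ι_app_hom F k' d) x'
    simp only [types_comp_apply] at e1 e2
    rw [← e1, ← e2, h]
  exact (Types.FilteredColimit.colimit_eq_iff _).mp h'

lemma ev_eq_single [IsFiltered K] (F : K ⥤ (D ⥤ Type u)) {d : D} {k : K}
    {x y : (F.obj k).obj d}
    (h : (colimit.ι F k).app d x = (colimit.ι F k).app d y) :
    ∃ (l : K) (w : k ⟶ l), (F.map w).app d x = (F.map w).app d y := by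
  obtain ⟨l, u, v, huv⟩ := ev_eq_iff F h
  refine ⟨IsFiltered.coeq u v, u ≫ IsFiltered.coeqHom u v, ?_⟩
  have hc : u ≫ IsFiltered.coeqHom u v = v ≫ IsFiltered.coeqHom u v :=
    IsFiltered.coeq_condition u v
  calc (F.map (u ≫ IsFiltered.coeqHom u v)).app d x
      = (F.map (IsFiltered.coeqHom u v)).app d ((F.map u).app d x) := by
        rw [F.map_comp]; rfl
    _ = (F.map (IsFiltered.coeqHom u v)).app d ((F.map v).app d y) := by rw [huv]
    _ = (F.map (v ≫ IsFiltered.coeqHom u v)).app d y := by rw [F.map_comp]; rfl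
    _ = (F.map (u ≫ IsFiltered.coeqHom u v)).app d y := by rw [← hc]

/-- a family obtained by restricting a single element is compatible -/
lemma compatible_of_restriction {C : Type u} [SmallCategory C] (P : Cᵒᵖ ⥤ Type u) {c : C}
    {ι : Type u} (Y : ι → C) (g : ∀ i, Y i ⟶ c) (t : P.obj (op c)) :
    Presieve.Arrows.Compatible P g (fun i => P.map (g i).op t) := by
  intro i j Z gi gj hcomm
  have : P.map gi.op (P.map (g i).op t) = P.map (gi ≫ g i).op t := by
    rw [op_comp, P.map_comp]; rfl
  rw [this]
  have : P.map gj.op (P.map (g j).op t) = P.map (gj ≫ g j).op t := by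
    rw [op_comp, P.map_comp]; rfl
  rw [this, hcomm]

theorem isSheaf_colimit {C : Type u} [SmallCategory C] [HasPullbacks C]
    (J : GrothendieckTopology C) (hJ : FinitaryTopology J)
    {K : Type u} [SmallCategory K] [IsFiltered K]
    (F : K ⥤ (Cᵒᵖ ⥤ Type u)) (hF : ∀ k, Presieve.IsSheaf J (F.obj k)) :
    Presieve.IsSheaf J (colimit F) := by
  classical
  intro c S hS
  obtain ⟨ι, hfin, Y, g, hg, hgen⟩ := hJ c S hS
  have : Finite ι := hfin
  cases nonempty_fintype ι
  have key : ∀ P : Cᵒᵖ ⥤ Type u,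
      Presieve.IsSheafFor P S.arrows ↔ Presieve.IsSheafFor P (Presieve.ofArrows Y g) := by
    intro P
    conv_lhs => rw [← hgen]
    rw [← Presieve.isSheafFor_iff_generate]
  rw [show Presieve.IsSheafFor (colimit F) S.arrows ↔ _ from key (colimit F)]
  have hFk : ∀ k (x : ∀ i, (F.obj k).obj (op (Y i))),
      Presieve.Arrows.Compatible (F.obj k) g x →
      ∃! t, ∀ i, (F.obj k).map (g i).op t = x i := fun k =>
    (Presieve.isSheafFor_arrows_iff _ _).mp ((key (F.obj k)).mp (hF k S hS))
  rw [Presieve.isSheafFor_arrows_iff]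
  intro x hx
  rw [Presieve.Arrows.pullbackCompatible_iff] at hx
  -- step 1: represent each x i at some stage
  choose k₀ x₀ hx₀ using fun i => ev_jointly_surjective F (op (Y i)) (x i)
  -- step 2: common stage m
  let cc := IsFiltered.cocone (Discrete.functor k₀)
  let m := cc.pt
  let f : ∀ i, k₀ i ⟶ m := fun i => cc.ι.app ⟨i⟩
  let y : ∀ i, (F.obj m).obj (op (Y i)) := fun i => (F.map (f i)).app _ (x₀ i)
  have hy : ∀ i, (colimit.ι F m).app (op (Y i)) (y i) = x i := fun i =>
    (ι_naturality_apply F (f i) _ (x₀ i)).trans (hx₀ i)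
  -- step 3: compatibility equalities at colimit level, pull to stages
  have hpair : ∀ p : ι × ι, (colimit.ι F m).app (op (pullback (g p.1) (g p.2)))
      ((F.obj m).map (pullback.fst (g p.1) (g p.2)).op (y p.1))
      = (colimit.ι F m).app (op (pullback (g p.1) (g p.2)))
      ((F.obj m).map (pullback.snd (g p.1) (g p.2)).op (y p.2)) := by
    rintro ⟨i, j⟩
    have n1 := types_congr_hom ((colimit.ι F m).naturality (pullback.fst (g i) (g j)).op) (y i)
    have n2 := types_congr_hom ((colimit.ι F m).naturality (pullback.snd (g i) (g j)).op) (y j)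
    simp only [types_comp_apply] at n1 n2
    rw [n1, n2, hy i, hy j]
    exact hx i j
  choose l w hlw using fun p : ι × ι => ev_eq_single F (hpair p)
  obtain ⟨n, e, z, hz⟩ := fan_exists m l w
  let Y1 : ∀ i, (F.obj n).obj (op (Y i)) := fun i => (F.map z).app _ (y i)
  have hY1 : ∀ i, (colimit.ι F n).app (op (Y i)) (Y1 i) = x i := fun i =>
    (ι_naturality_apply F z _ (y i)).trans (hy i)
  have hcomp : Presieve.Arrows.Compatible (F.obj n) g Y1 := by
    rw [Presieve.Arrows.pullbackCompatible_iff]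
    intro i j
    have n1 := types_congr_hom ((F.map z).naturality (pullback.fst (g i) (g j)).op) (y i)
    have n2 := types_congr_hom ((F.map z).naturality (pullback.snd (g i) (g j)).op) (y j)
    simp only [types_comp_apply] at n1 n2
    rw [← n1, ← n2, ← hz (i, j), F.map_comp]
    show (F.map (e (i,j))).app _ ((F.map (w (i,j))).app _ _)
      = (F.map (e (i,j))).app _ ((F.map (w (i,j))).app _ _)
    rw [hlw (i, j)]
  obtain ⟨t₀, ht₀, -⟩ := hFk n Y1 hcomp
  refine ⟨(colimit.ι F n).app (op c) t₀, fun i => ?_, ?_⟩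
  · have n1 := types_congr_hom ((colimit.ι F n).naturality (g i).op) t₀
    simp only [types_comp_apply] at n1
    rw [← n1, ht₀ i]
    exact hY1 i
  · -- uniqueness
    intro t' ht'
    obtain ⟨a, α', hα'⟩ := ev_jointly_surjective F (op c) t'
    let b := IsFiltered.max a n
    let α : (F.obj b).obj (op c) := (F.map (IsFiltered.leftToMax a n)).app _ α'
    let τ : (F.obj b).obj (op c) := (F.map (IsFiltered.rightToMax a n)).app _ t₀
    have hαx : ∀ i, (colimit.ι F b).app (op (Y i)) ((F.obj b).map (g i).op α) = x i := by
      intro i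
      have n1 := types_congr_hom ((F.map (IsFiltered.leftToMax a n)).naturality (g i).op) α'
      have n2 := types_congr_hom ((colimit.ι F a).naturality (g i).op) α'
      simp only [types_comp_apply] at n1 n2
      calc (colimit.ι F b).app (op (Y i)) ((F.obj b).map (g i).op α)
          = (colimit.ι F b).app (op (Y i))
            ((F.map (IsFiltered.leftToMax a n)).app (op (Y i)) ((F.obj a).map (g i).op α')) :=
            congrArg ((colimit.ι F b).app (op (Y i))) n1.symm
        _ = (colimit.ι F a).app (op (Y i)) ((F.obj a).map (g i).op α') :=
            ι_naturality_apply F _ _ _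
        _ = (colimit F).map (g i).op ((colimit.ι F a).app (op c) α') := n2
        _ = (colimit F).map (g i).op t' := by rw [hα']
        _ = x i := ht' i
    have hτx : ∀ i, (colimit.ι F b).app (op (Y i)) ((F.obj b).map (g i).op τ) = x i := by
      intro i
      have n1 := types_congr_hom ((F.map (IsFiltered.rightToMax a n)).naturality (g i).op) t₀
      simp only [types_comp_apply] at n1
      calc (colimit.ι F b).app (op (Y i)) ((F.obj b).map (g i).op τ)
          = (colimit.ι F b).app (op (Y i))
            ((F.map (IsFiltered.rightToMax a n)).app (op (Y i)) ((F.obj n).map (g i).op t₀)) :=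
            congrArg ((colimit.ι F b).app (op (Y i))) n1.symm
        _ = (colimit.ι F n).app (op (Y i)) ((F.obj n).map (g i).op t₀) :=
            ι_naturality_apply F _ _ _
        _ = (colimit.ι F n).app (op (Y i)) (Y1 i) := by rw [ht₀ i]
        _ = x i := hY1 i
    have heq : ∀ i, (colimit.ι F b).app (op (Y i)) ((F.obj b).map (g i).op α)
        = (colimit.ι F b).app (op (Y i)) ((F.obj b).map (g i).op τ) := fun i =>
      (hαx i).trans (hτx i).symm
    choose l' w' hlw' using fun i => ev_eq_single F (heq i)
    obtain ⟨r, e', q, hq⟩ := fan_exists b l' w'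
    have hfin2 : ∀ i, (F.obj r).map (g i).op ((F.map q).app _ α)
        = (F.obj r).map (g i).op ((F.map q).app _ τ) := by
      intro i
      have n1 := types_congr_hom ((F.map q).naturality (g i).op) α
      have n2 := types_congr_hom ((F.map q).naturality (g i).op) τ
      simp only [types_comp_apply] at n1 n2
      rw [← n1, ← n2, ← hq i, F.map_comp]
      show (F.map (e' i)).app _ ((F.map (w' i)).app _ _)
        = (F.map (e' i)).app _ ((F.map (w' i)).app _ _)
      rw [hlw' i]
    -- both are amalgamations of the same compatible family at stage r
    have hcfam := compatible_of_restriction (F.obj r) Y g ((F.map q).app _ α)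
    obtain ⟨s, -, hsu⟩ := hFk r _ hcfam
    have h1 : (F.map q).app _ α = s := hsu _ (fun i => rfl)
    have h2 : (F.map q).app _ τ = s := hsu _ (fun i => (hfin2 i).symm)
    have : (F.map q).app (op c) α = (F.map q).app (op c) τ := h1.trans h2.symm
    calc t' = (colimit.ι F a).app (op c) α' := hα'.symm
      _ = (colimit.ι F b).app (op c) α := (ι_naturality_apply F _ _ _).symm
      _ = (colimit.ι F r).app (op c) ((F.map q).app (op c) α) :=
          (ι_naturality_apply F q _ α).symm
      _ = (colimit.ι F r).app (op c) ((F.map q).app (op c) τ) := by rw [this]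
      _ = (colimit.ι F b).app (op c) τ := ι_naturality_apply F q _ τ
      _ = (colimit.ι F n).app (op c) t₀ := ι_naturality_apply F _ _ _


section Part2
variable {C : Type u} [SmallCategory C]

theorem preservesColimit_sheafToPresheaf [HasPullbacks C]
    (J : GrothendieckTopology C) (hJ : FinitaryTopology J)
    {K : Type u} [SmallCategory K] [IsFiltered K] (F : K ⥤ Sheaf J (Type u)) :
    PreservesColimit F (sheafToPresheaf J (Type u)) := by
  have hsheaf : Presieve.IsSheaf J (colimit (F ⋙ sheafToPresheaf J (Type u))) :=
    isSheaf_colimit J hJ _ (fun k =>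
      (isSheaf_iff_isSheaf_of_type J _).mp (F.obj k).cond)
  let Q : Sheaf J (Type u) :=
    ⟨colimit (F ⋙ sheafToPresheaf J (Type u)), (isSheaf_iff_isSheaf_of_type J _).mpr hsheaf⟩
  let E : Cocone F :=
    { pt := Q
      ι :=
        { app := fun k => ⟨colimit.ι (F ⋙ sheafToPresheaf J (Type u)) k⟩
          naturality := fun k k' uu => by
            apply Sheaf.hom_ext
            simpa using colimit.w (F ⋙ sheafToPresheaf J (Type u)) uu } }
  have hE : IsColimit ((sheafToPresheaf J (Type u)).mapCocone E) := by
    refine IsColimit.ofIsoColimit (colimit.isColimit (F ⋙ sheafToPresheaf J (Type u)))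
      (Cocones.ext (Iso.refl _) ?_)
    intro k
    simp [E, Q]
  have hE' : IsColimit E := isColimitOfReflects (sheafToPresheaf J (Type u)) hE
  exact preservesColimit_of_preserves_colimit_cocone hE' hE

theorem preservesFiltered_sheafToPresheaf [HasPullbacks C]
    (J : GrothendieckTopology C) (hJ : FinitaryTopology J) :
    PreservesFilteredColimitsOfSize.{u, u} (sheafToPresheaf J (Type u)) :=
  ⟨fun K _ _ => ⟨fun {F} => preservesColimit_sheafToPresheaf J hJ F⟩⟩

/-- natural iso `Hom(a(yc), -) ≅ (-).val.obj (op c)` -/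
noncomputable def ayIso (J : GrothendieckTopology C) (c : C) :
    coyoneda.obj (op ((presheafToSheaf J (Type u)).obj (yoneda.obj c)))
      ≅ sheafToPresheaf J (Type u) ⋙ (evaluation Cᵒᵖ (Type u)).obj (op c) :=
  NatIso.ofComponents
    (fun X => Equiv.toIso
      (((sheafificationAdjunction J (Type u)).homEquiv (yoneda.obj c) X).trans yonedaEquiv))
    (fun {X X'} f => by
      ext h
      show yonedaEquiv (((sheafificationAdjunction J (Type u)).homEquiv (yoneda.obj c) X')
          (h ≫ f))
        = ((sheafToPresheaf J (Type u)).map f).app (op c)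
          (yonedaEquiv (((sheafificationAdjunction J (Type u)).homEquiv (yoneda.obj c) X) h))
      rw [Adjunction.homEquiv_naturality_right, yonedaEquiv_comp])

theorem ay_compact [HasPullbacks C] (J : GrothendieckTopology C) (hJ : FinitaryTopology J)
    (c : C) :
    PreservesFilteredColimitsOfSize.{u, u}
      (coyoneda.obj (op ((presheafToSheaf J (Type u)).obj (yoneda.obj c)))) := by
  constructor
  intro K _ _
  haveI := (preservesFiltered_sheafToPresheaf J hJ).preserves_filtered_colimits K
  haveI : PreservesColimitsOfShape K
      (sheafToPresheaf J (Type u) ⋙ (evaluation Cᵒᵖ (Type u)).obj (op c)) :=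
    comp_preservesColimitsOfShape _ _
  exact preservesColimitsOfShape_of_natIso (ayIso J c).symm

end Part2

section Compacts

lemma filtered_eq_single {K : Type u} [SmallCategory K] [IsFiltered K] (F : K ⥤ Type u)
    {k : K} {x y : F.obj k} (h : colimit.ι F k x = colimit.ι F k y) :
    ∃ (l : K) (w : k ⟶ l), F.map w x = F.map w y := by
  obtain ⟨l, uu, v, huv⟩ := (Types.FilteredColimit.colimit_eq_iff F).mp h
  refine ⟨IsFiltered.coeq uu v, uu ≫ IsFiltered.coeqHom uu v, ?_⟩
  have hc : uu ≫ IsFiltered.coeqHom uu v = v ≫ IsFiltered.coeqHom uu v :=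
    IsFiltered.coeq_condition uu v
  calc F.map (uu ≫ IsFiltered.coeqHom uu v) x
      = F.map (IsFiltered.coeqHom uu v) (F.map uu x) := by rw [F.map_comp]; rfl
    _ = F.map (IsFiltered.coeqHom uu v) (F.map v y) := by rw [huv]
    _ = F.map (v ≫ IsFiltered.coeqHom uu v) y := by rw [F.map_comp]; rfl
    _ = F.map (uu ≫ IsFiltered.coeqHom uu v) y := by rw [← hc]

variable {A : Type (u + 1)} [Category.{u} A]

/-- a "compact" object: co-yoneda preserves filtered colimits -/
abbrev Cpt (X : A) : Prop :=
  PreservesFilteredColimitsOfSize.{u, u} (coyoneda.obj (op X))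

lemma compact_hom_lift {X : A} (hX : Cpt X) {K : Type u} [SmallCategory K] [IsFiltered K]
    (G : K ⥤ A) [HasColimit G] (f : X ⟶ colimit G) :
    ∃ (k : K) (h : X ⟶ G.obj k), h ≫ colimit.ι G k = f := by
  haveI := hX
  have hc : IsColimit ((coyoneda.obj (op X)).mapCocone (colimit.cocone G)) :=
    isColimitOfPreserves _ (colimit.isColimit G)
  obtain ⟨k, y, hy⟩ := Types.jointly_surjective _ hc f
  exact ⟨k, y, hy⟩

lemma compact_hom_eq {X : A} (hX : Cpt X) {K : Type u} [SmallCategory K] [IsFiltered K]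
    (G : K ⥤ A) [HasColimit G] {k : K} (f f' : X ⟶ G.obj k)
    (h : f ≫ colimit.ι G k = f' ≫ colimit.ι G k) :
    ∃ (l : K) (w : k ⟶ l), f ≫ G.map w = f' ≫ G.map w := by
  haveI := hX
  have hc : IsColimit ((coyoneda.obj (op X)).mapCocone (colimit.cocone G)) :=
    isColimitOfPreserves (coyoneda.obj (op X)) (colimit.isColimit G)
  set F' := G ⋙ coyoneda.obj (op X) with hF'
  have hφ : ∀ (j : K) (g : X ⟶ G.obj j),
      (((colimit.isColimit F').coconePointUniqueUpToIso hc).hom) (colimit.ι F' j g)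
        = g ≫ colimit.ι G j := by
    intro j g
    have := types_congr_hom ((colimit.isColimit F').comp_coconePointUniqueUpToIso_hom hc j) g
    exact this
  have heq : colimit.ι F' k f = colimit.ι F' k f' := by
    apply (((colimit.isColimit F').coconePointUniqueUpToIso hc).toEquiv).injective
    show (((colimit.isColimit F').coconePointUniqueUpToIso hc).hom) _
      = (((colimit.isColimit F').coconePointUniqueUpToIso hc).hom) _
    rw [hφ k f, hφ k f']
    exact h
  exact filtered_eq_single F' heq

lemma compact_initial [HasColimitsOfSize.{u, u} A] [HasInitial A] : Cpt (⊥_ A) := by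
  constructor
  intro K _ _
  constructor
  intro G
  apply preservesColimit_of_preserves_colimit_cocone (colimit.isColimit G)
  apply Types.FilteredColimit.isColimitOf
  · intro x
    obtain ⟨k⟩ := IsFiltered.nonempty (C := K)
    exact ⟨k, initial.to _, initialIsInitial.hom_ext _ _⟩
  · intro i j xi xj _
    obtain ⟨l, fl, gl, -⟩ := IsFilteredOrEmpty.cocone_objs i j
    exact ⟨l, fl, gl, initialIsInitial.hom_ext _ _⟩

lemma compact_coprod [HasColimitsOfSize.{u, u} A] {X Y : A} (hX : Cpt X) (hY : Cpt Y) :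
    Cpt (X ⨿ Y) := by
  constructor
  intro K _ _
  constructor
  intro G
  apply preservesColimit_of_preserves_colimit_cocone (colimit.isColimit G)
  apply Types.FilteredColimit.isColimitOf
  · intro f
    obtain ⟨k₁, h₁, hh₁⟩ := compact_hom_lift hX G (coprod.inl ≫ f)
    obtain ⟨k₂, h₂, hh₂⟩ := compact_hom_lift hY G (coprod.inr ≫ f)
    refine ⟨IsFiltered.max k₁ k₂,
      coprod.desc (h₁ ≫ G.map (IsFiltered.leftToMax k₁ k₂))
        (h₂ ≫ G.map (IsFiltered.rightToMax k₁ k₂)), ?_⟩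
    show f = coprod.desc _ _ ≫ colimit.ι G _
    apply coprod.hom_ext
    · rw [coprod.inl_desc_assoc, Category.assoc, colimit.w, hh₁]
    · rw [coprod.inr_desc_assoc, Category.assoc, colimit.w, hh₂]
  · intro i j fi fj hij
    obtain ⟨m, um, vm, -⟩ := IsFilteredOrEmpty.cocone_objs i j
    have h1 : (fi ≫ G.map um) ≫ colimit.ι G m = (fj ≫ G.map vm) ≫ colimit.ι G m := by
      rw [Category.assoc, colimit.w, Category.assoc, colimit.w]
      exact hij
    have h1l : (coprod.inl ≫ fi ≫ G.map um) ≫ colimit.ι G m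
        = (coprod.inl ≫ fj ≫ G.map vm) ≫ colimit.ι G m := by
      have := congrArg (fun t => coprod.inl ≫ t) h1
      simpa only [Category.assoc] using this
    have h1r : (coprod.inr ≫ fi ≫ G.map um) ≫ colimit.ι G m
        = (coprod.inr ≫ fj ≫ G.map vm) ≫ colimit.ι G m := by
      have := congrArg (fun t => coprod.inr ≫ t) h1
      simpa only [Category.assoc] using this
    obtain ⟨l₁, w₁, hw₁⟩ := compact_hom_eq hX G _ _ h1l
    have h2 : (coprod.inr ≫ fi ≫ G.map um ≫ G.map w₁) ≫ colimit.ι G l₁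
        = (coprod.inr ≫ fj ≫ G.map vm ≫ G.map w₁) ≫ colimit.ι G l₁ := by
      simp only [Category.assoc, colimit.w]
      simpa only [Category.assoc, colimit.w] using h1r
    obtain ⟨l₃, w₃, hw₃⟩ := compact_hom_eq hY G _ _ h2
    refine ⟨l₃, (um ≫ w₁) ≫ w₃, (vm ≫ w₁) ≫ w₃, ?_⟩
    show fi ≫ G.map ((um ≫ w₁) ≫ w₃) = fj ≫ G.map ((vm ≫ w₁) ≫ w₃)
    apply coprod.hom_ext
    · have h3 := congrArg (fun t => t ≫ G.map w₃) hw₁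
      simp only [Category.assoc] at h3
      simpa only [G.map_comp, Category.assoc] using h3
    · simpa only [G.map_comp, Category.assoc] using hw₃

lemma compact_coeq [HasColimitsOfSize.{u, u} A] {X Y : A} (φ ψ : X ⟶ Y)
    (hX : Cpt X) (hY : Cpt Y) : Cpt (coequalizer φ ψ) := by
  constructor
  intro K _ _
  constructor
  intro G
  apply preservesColimit_of_preserves_colimit_cocone (colimit.isColimit G)
  apply Types.FilteredColimit.isColimitOf
  · intro f
    obtain ⟨k, h, hh⟩ := compact_hom_lift hY G (coequalizer.π φ ψ ≫ f)
    have hcoeq : (φ ≫ h) ≫ colimit.ι G k = (ψ ≫ h) ≫ colimit.ι G k := by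
      rw [Category.assoc, hh, Category.assoc, hh, ← Category.assoc, ← Category.assoc,
        coequalizer.condition]
    obtain ⟨l, w, hw⟩ := compact_hom_eq hX G _ _ hcoeq
    have hfac : φ ≫ h ≫ G.map w = ψ ≫ h ≫ G.map w := by
      rw [← Category.assoc, ← Category.assoc]
      exact hw
    refine ⟨l, coequalizer.desc (h ≫ G.map w) hfac, ?_⟩
    show f = coequalizer.desc (h ≫ G.map w) hfac ≫ colimit.ι G l
    apply coequalizer.hom_ext
    rw [← hh]
    simp [colimit.w]
  · intro i j fi fj hij
    obtain ⟨m, um, vm, -⟩ := IsFilteredOrEmpty.cocone_objs i j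
    have h1 : (coequalizer.π φ ψ ≫ fi ≫ G.map um) ≫ colimit.ι G m
        = (coequalizer.π φ ψ ≫ fj ≫ G.map vm) ≫ colimit.ι G m := by
      have hij' : fi ≫ colimit.ι G i = fj ≫ colimit.ι G j := hij
      simp only [Category.assoc, colimit.w]
      rw [hij']
    obtain ⟨l, w, hw⟩ := compact_hom_eq hY G _ _ h1
    refine ⟨l, um ≫ w, vm ≫ w, ?_⟩
    show fi ≫ G.map (um ≫ w) = fj ≫ G.map (vm ≫ w)
    apply coequalizer.hom_ext
    simpa only [G.map_comp, Category.assoc] using hw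

lemma compact_of_iso [HasColimitsOfSize.{u, u} A] {X X' : A} (e : X ≅ X') (hX : Cpt X) :
    Cpt X' := by
  constructor
  intro K _ _
  haveI := hX.preserves_filtered_colimits K
  exact preservesColimitsOfShape_of_natIso (coyoneda.mapIso e.symm.op)

end Compacts

section Accessibility

variable {C : Type u} [SmallCategory C]

/-- sheaves generated from sheafified representables in at most `n` steps -/
def GenN (J : GrothendieckTopology C) : ℕ → Sheaf J (Type u) → Prop
  | 0, A => (∃ c : C, A = (presheafToSheaf J (Type u)).obj (yoneda.obj c))
      ∨ A = ⊥_ (Sheaf J (Type u))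
  | (n + 1), A => GenN J n A
      ∨ (∃ B B', GenN J n B ∧ GenN J n B' ∧ A = (B ⨿ B'))
      ∨ (∃ (B B' : Sheaf J (Type u)) (f g : B ⟶ B'),
          GenN J n B ∧ GenN J n B' ∧ A = coequalizer f g)

def Gen (J : GrothendieckTopology C) (A : Sheaf J (Type u)) : Prop := ∃ n, GenN J n A

variable (J : GrothendieckTopology C)

lemma genN_le {n m : ℕ} (h : n ≤ m) {A : Sheaf J (Type u)} (hA : GenN J n A) :
    GenN J m A := by
  induction h with
  | refl => exact hA
  | step _ ih => exact Or.inl ih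

lemma gen_ay (c : C) : Gen J ((presheafToSheaf J (Type u)).obj (yoneda.obj c)) :=
  ⟨0, Or.inl ⟨c, rfl⟩⟩

lemma gen_bot : Gen J (⊥_ (Sheaf J (Type u))) := ⟨0, Or.inr rfl⟩

lemma gen_coprod {A B : Sheaf J (Type u)} (hA : Gen J A) (hB : Gen J B) :
    Gen J (A ⨿ B) := by
  obtain ⟨n, hn⟩ := hA
  obtain ⟨m, hm⟩ := hB
  exact ⟨max n m + 1, Or.inr (Or.inl ⟨A, B, genN_le J (le_max_left n m) hn,
    genN_le J (le_max_right n m) hm, rfl⟩)⟩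

lemma gen_coeq {A B : Sheaf J (Type u)} (f g : A ⟶ B) (hA : Gen J A) (hB : Gen J B) :
    Gen J (coequalizer f g) := by
  obtain ⟨n, hn⟩ := hA
  obtain ⟨m, hm⟩ := hB
  exact ⟨max n m + 1, Or.inr (Or.inr ⟨A, B, f, g, genN_le J (le_max_left n m) hn,
    genN_le J (le_max_right n m) hm, rfl⟩)⟩

lemma small_genN (n : ℕ) : Small.{u} {A : Sheaf J (Type u) // GenN J n A} := by
  induction n with
  | zero =>
    refine small_of_surjective (f := fun (o : Option C) =>
      (match o with
        | some c => ⟨(presheafToSheaf J (Type u)).obj (yoneda.obj c), Or.inl ⟨c, rfl⟩⟩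
        | none => ⟨⊥_ (Sheaf J (Type u)), Or.inr rfl⟩ :
          {A : Sheaf J (Type u) // GenN J 0 A})) ?_
    rintro ⟨A, hc | hb⟩
    · obtain ⟨c, rfl⟩ := hc
      exact ⟨some c, rfl⟩
    · exact ⟨none, by simp [hb]⟩
  | succ n ih =>
    haveI := ih
    let P := {A : Sheaf J (Type u) // GenN J n A}
    let Dom := P ⊕ (P × P) ⊕ (Σ p : P × P, (p.1.1 ⟶ p.2.1) × (p.1.1 ⟶ p.2.1))
    haveI : Small.{u} Dom := by infer_instance
    refine small_of_surjective (f := fun (d : Dom) =>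
      (match d with
        | Sum.inl ⟨A, hA⟩ => ⟨A, Or.inl hA⟩
        | Sum.inr (Sum.inl (⟨B, hB⟩, ⟨B', hB'⟩)) =>
            ⟨B ⨿ B', Or.inr (Or.inl ⟨B, B', hB, hB', rfl⟩)⟩
        | Sum.inr (Sum.inr ⟨(⟨B, hB⟩, ⟨B', hB'⟩), (f, g)⟩) =>
            ⟨coequalizer f g, Or.inr (Or.inr ⟨B, B', f, g, hB, hB', rfl⟩)⟩ :
          {A : Sheaf J (Type u) // GenN J (n + 1) A})) ?_
    rintro ⟨A, hA | hcop | hcoeq⟩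
    · exact ⟨Sum.inl ⟨A, hA⟩, rfl⟩
    · obtain ⟨B, B', hB, hB', rfl⟩ := hcop
      exact ⟨Sum.inr (Sum.inl (⟨B, hB⟩, ⟨B', hB'⟩)), rfl⟩
    · obtain ⟨B, B', f, g, hB, hB', rfl⟩ := hcoeq
      exact ⟨Sum.inr (Sum.inr ⟨(⟨B, hB⟩, ⟨B', hB'⟩), (f, g)⟩), rfl⟩

lemma small_gen : Small.{u} {A : Sheaf J (Type u) // Gen J A} := by
  haveI := small_genN J
  refine small_of_surjective
    (f := fun (p : Σ n : ℕ, {A : Sheaf J (Type u) // GenN J n A}) =>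
      (⟨p.2.1, ⟨p.1, p.2.2⟩⟩ : {A : Sheaf J (Type u) // Gen J A})) ?_
  rintro ⟨A, n, hn⟩
  exact ⟨⟨n, A, hn⟩, rfl⟩

lemma compact_of_gen [HasPullbacks C] (hJ : FinitaryTopology J) {A : Sheaf J (Type u)}
    (h : Gen J A) : Cpt A := by
  obtain ⟨n, hn⟩ := h
  induction n generalizing A with
  | zero =>
    rcases hn with ⟨c, rfl⟩ | rfl
    · exact ay_compact J hJ c
    · exact compact_initial
  | succ n ih =>
    rcases hn with hA | ⟨B, B', hB, hB', rfl⟩ | ⟨B, B', f, g, hB, hB', rfl⟩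
    · exact ih hA
    · exact compact_coprod (ih hB) (ih hB')
    · exact compact_coeq f g (ih hB) (ih hB')

variable (X : Sheaf J (Type u))

/-- the comma category of generated sheaves over `X` -/
def DCat := ObjectProperty.FullSubcategory (fun f : Over X => Gen J f.left)

instance : Category.{u} (DCat J X) := ObjectProperty.FullSubcategory.category _

/-- the forgetful functor -/
def DFor : DCat J X ⥤ Sheaf J (Type u) :=
  ObjectProperty.ι _ ⋙ Over.forget X

lemma small_DCat : Small.{u} (DCat J X) := by
  haveI := small_gen J
  refine small_of_surjective
    (f := fun (p : Σ A : {A : Sheaf J (Type u) // Gen J A}, (A.1 ⟶ X)) =>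
      (⟨Over.mk p.2, p.1.2⟩ : DCat J X)) ?_
  rintro ⟨⟨L, ⟨⟨⟩⟩, hom⟩, hL⟩
  exact ⟨⟨⟨L, hL⟩, hom⟩, rfl⟩

instance : IsFilteredOrEmpty (DCat J X) := by
  constructor
  · intro A B
    refine ⟨⟨Over.mk (coprod.desc A.1.hom B.1.hom), gen_coprod J A.2 B.2⟩,
      ObjectProperty.homMk (Over.homMk coprod.inl (by exact coprod.inl_desc _ _)),
      ObjectProperty.homMk (Over.homMk coprod.inr (by exact coprod.inr_desc _ _)), trivial⟩
  · intro A B f g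
    refine ⟨⟨Over.mk (coequalizer.desc B.1.hom ?_), gen_coeq J f.hom.left g.hom.left A.2 B.2⟩,
      ObjectProperty.homMk (Over.homMk (coequalizer.π f.hom.left g.hom.left) (by simp)), ?_⟩
    · rw [Over.w f.hom, Over.w g.hom]
    · apply ObjectProperty.hom_ext
      apply Over.OverMorphism.ext
      exact coequalizer.condition f.hom.left g.hom.left

instance : IsFiltered (DCat J X) :=
  { nonempty := ⟨⟨Over.mk (initial.to X), gen_bot J⟩⟩ }

/-- the tautological cocone over `X` -/
def ΨCocone : Cocone (DFor J X) where
  pt := X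
  ι :=
    { app := fun f => f.1.hom
      naturality := fun f g uu => by
        have := Over.w uu.hom
        simp only [DFor, Functor.comp_map, Functor.const_obj_map, Category.comp_id]
        exact this }

lemma ay_jointly_epi {A Z : Sheaf J (Type u)} (p q : A ⟶ Z)
    (h : ∀ (c : C) (φ : yoneda.obj c ⟶ A.val),
      ((sheafificationAdjunction J (Type u)).homEquiv (yoneda.obj c) A).symm φ ≫ p
        = ((sheafificationAdjunction J (Type u)).homEquiv (yoneda.obj c) A).symm φ ≫ q) :
    p = q := by
  apply Sheaf.hom_ext
  ext c x
  obtain ⟨c⟩ := c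
  let φ : yoneda.obj c ⟶ A.val := yonedaEquiv.symm x
  have h1 := congrArg ((sheafificationAdjunction J (Type u)).homEquiv (yoneda.obj c) Z) (h c φ)
  rw [← Adjunction.homEquiv_naturality_right_symm, ← Adjunction.homEquiv_naturality_right_symm,
    Equiv.apply_symm_apply, Equiv.apply_symm_apply] at h1
  have h2 := congrArg yonedaEquiv h1
  rw [yonedaEquiv_comp, yonedaEquiv_comp] at h2
  simpa [φ, Equiv.apply_symm_apply] using h2

/-- the functor from the category of elements of `X.val` into `DCat` -/
@[simps]
noncomputable def ΦFun : CostructuredArrow yoneda X.val ⥤ DCat J X where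
  obj e := ⟨Over.mk ((presheafToSheaf J (Type u)).map e.hom
      ≫ (sheafificationAdjunction J (Type u)).counit.app X), gen_ay J e.left⟩
  map {e e'} uu := ObjectProperty.homMk (Over.homMk ((presheafToSheaf J (Type u)).map (yoneda.map uu.left)) (by
    dsimp
    rw [← Category.assoc, ← Functor.map_comp, CostructuredArrow.w uu]))
  map_id e := by
    apply ObjectProperty.hom_ext
    apply Over.OverMorphism.ext
    simp
    rfl
  map_comp uu vv := by
    apply ObjectProperty.hom_ext
    apply Over.OverMorphism.ext
    simp
    rfl

noncomputable def χIso :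
    (CostructuredArrow.proj yoneda X.val ⋙ yoneda) ⋙ presheafToSheaf J (Type u)
      ≅ ΦFun J X ⋙ DFor J X :=
  NatIso.ofComponents (fun e => Iso.refl _) (by
    intro e e' uu
    dsimp [ΦFun, DFor]
    erw [Category.comp_id])

noncomputable def ΘCocone :
    Cocone ((CostructuredArrow.proj yoneda X.val ⋙ yoneda) ⋙ presheafToSheaf J (Type u)) where
  pt := X
  ι :=
    { app := fun e => (presheafToSheaf J (Type u)).map e.hom
        ≫ (sheafificationAdjunction J (Type u)).counit.app X
      naturality := fun e e' uu => by
        dsimp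
        rw [Category.comp_id, ← CostructuredArrow.w uu]
        exact (Category.assoc _ _ _).symm.trans (congrArg (· ≫ (sheafificationAdjunction J (Type u)).counit.app X) ((presheafToSheaf J (Type u)).map_comp _ _).symm) }

noncomputable def isColimit_Θ : IsColimit (ΘCocone J X) := by
  have hT := Presheaf.isColimitTautologicalCocone X.val
  have haT : IsColimit
      ((presheafToSheaf J (Type u)).mapCocone (Presheaf.tautologicalCocone X.val)) :=
    isColimitOfPreserves _ hT
  haveI : IsIso ((sheafificationAdjunction J (Type u)).counit.app X) :=
    isIso_sheafificationAdjunction_counit X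
  refine haT.ofIsoColimit (Cocones.ext
    (@asIso _ _ _ _ ((sheafificationAdjunction J (Type u)).counit.app X) this) ?_)
  intro e
  rfl

set_option maxHeartbeats 1600000 in
noncomputable def isColimit_Ψ : IsColimit (ΨCocone J X) where
  desc σ := (isColimit_Θ J X).desc
    ((Cocone.precompose (χIso J X).hom).obj (Cocone.whisker (ΦFun J X) σ))
  fac σ d := by
    have hfac : ∀ e, (ΘCocone J X).ι.app e ≫ (isColimit_Θ J X).desc
        ((Cocone.precompose (χIso J X).hom).obj (Cocone.whisker (ΦFun J X) σ))
        = σ.ι.app ((ΦFun J X).obj e) := by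
      intro e
      rw [(isColimit_Θ J X).fac]
      show (χIso J X).hom.app e ≫ σ.ι.app ((ΦFun J X).obj e) = _
      exact Category.id_comp _
    apply ay_jointly_epi J
    intro c φ
    have key1 : ((sheafificationAdjunction J (Type u)).homEquiv (yoneda.obj c)
          d.1.left).symm φ ≫ (ΨCocone J X).ι.app d
        = (ΘCocone J X).ι.app (CostructuredArrow.mk (φ ≫ d.1.hom.hom)) := by
      exact (Adjunction.homEquiv_naturality_right_symm (sheafificationAdjunction J (Type u)) φ d.1.hom).symm.trans
        ((sheafificationAdjunction J (Type u)).homEquiv_counit _ _ _)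
    let e : CostructuredArrow yoneda X.val := CostructuredArrow.mk (φ ≫ d.1.hom.hom)
    let μ : (ΦFun J X).obj e ⟶ d := ObjectProperty.homMk (Over.homMk
      (((sheafificationAdjunction J (Type u)).homEquiv (yoneda.obj c) d.1.left).symm φ) (by
        exact key1))
    have hσ : σ.ι.app ((ΦFun J X).obj e)
        = ((sheafificationAdjunction J (Type u)).homEquiv (yoneda.obj c)
            d.1.left).symm φ ≫ σ.ι.app d := by
      have hw := σ.w μ
      exact hw.symm
    exact (show ((sheafificationAdjunction J (Type u)).homEquiv (yoneda.obj c) d.1.left).symm φ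
          ≫ (ΨCocone J X).ι.app d ≫ (isColimit_Θ J X).desc
            ((Cocone.precompose (χIso J X).hom).obj (Cocone.whisker (ΦFun J X) σ))
        = ((ΘCocone J X).ι.app e) ≫ (isColimit_Θ J X).desc
            ((Cocone.precompose (χIso J X).hom).obj (Cocone.whisker (ΦFun J X) σ)) by
          exact (Category.assoc _ _ _).symm.trans (congrArg (· ≫ _) key1)).trans ((hfac e).trans hσ)
  uniq σ m hm := by
    apply (isColimit_Θ J X).uniq
      ((Cocone.precompose (χIso J X).hom).obj (Cocone.whisker (ΦFun J X) σ)) m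
    intro e
    have h1 : (ΘCocone J X).ι.app e = (ΨCocone J X).ι.app ((ΦFun J X).obj e) := rfl
    rw [h1]
    erw [hm]
    show _ = (χIso J X).hom.app e ≫ σ.ι.app ((ΦFun J X).obj e)
    exact (Category.id_comp _).symm

end Accessibility


end LFPAux

/-- If `C` is a small finitely complete site whose topology `J` is finitary, then:
sheaves of sets are closed under filtered colimits computed in presheaves, the
sheafification reflector preserves filtered colimits, and the sheaf category is
finitely accessible — every sheaf is a filtered colimit of finitely presentable
objects (objects whose co-Yoneda functor preserves filtered colimits). -/
theorem finitary_site_locally_finitely_presentable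
    {C : Type u} [SmallCategory C] [HasFiniteLimits C]
    (J : GrothendieckTopology C) (hJ : FinitaryTopology J) :
    (∀ (K : Cat.{u, u}), IsFiltered K → ∀ F : K ⥤ (Cᵒᵖ ⥤ Type u),
      (∀ k : K, Presieve.IsSheaf J (F.obj k)) → Presieve.IsSheaf J (colimit F)) ∧
    PreservesFilteredColimitsOfSize.{u, u} (presheafToSheaf J (Type u)) ∧
    (∀ X : Sheaf J (Type u),
      ∃ (K : Cat.{u, u}), IsFiltered K ∧
        ∃ Dg : K ⥤ Sheaf J (Type u),
          (∀ k : K,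
            PreservesFilteredColimitsOfSize.{u, u} (coyoneda.obj (op (Dg.obj k)))) ∧
          Nonempty (colimit Dg ≅ X)) := by
  refine ⟨?_, ?_, ?_⟩
  · intro K hK F hF
    haveI := hK
    exact LFPAux.isSheaf_colimit J hJ F hF
  · exact ⟨fun K _ _ => inferInstance⟩
  · intro X
    haveI : Small.{u} (LFPAux.DCat J X) := LFPAux.small_DCat J X
    haveI : EssentiallySmall.{u} (LFPAux.DCat J X) :=
      essentiallySmall_of_small_of_locallySmall _
    let e : LFPAux.DCat J X ≌ SmallModel.{u} (LFPAux.DCat J X) := equivSmallModel _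
    haveI : IsFiltered (SmallModel.{u} (LFPAux.DCat J X)) := IsFiltered.of_equivalence e
    refine ⟨Cat.of (SmallModel.{u} (LFPAux.DCat J X)), IsFiltered.of_equivalence e,
      e.symm.functor ⋙ LFPAux.DFor J X, ?_, ?_⟩
    · intro k
      exact LFPAux.compact_of_gen J hJ ((e.symm.functor.obj k).2)
    · have hW := (LFPAux.isColimit_Ψ J X).whiskerEquivalence e.symm
      exact ⟨(colimit.isColimit _).coconePointUniqueUpToIso hW⟩


end
end
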